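/- arXiv:2605.29035 — 4 statements merged into one kernel-verified Lean document; each statement's English description precedes it below -/
import Mathlib

section
/- Cubic majorant lemma: for every real t > 0, 2t² log t ≤ P₃(t), where P₃(t) := 2(t − 1) + 3(t − 1)² + (2/3)(t − 1)³. -/
/-!
Let `g t = P₃(t) - 2t² log t`. Then `g 1 = g' 1 = 0` and `g'' t = 4 (t - 1 - log t) ≥ 0`,
so `g'` is monotone on `(0, ∞)` and changes sign at `1`; hence `g` is minimal at `1`,
where it vanishes.
-/

open Real Set

lemma isMinOn_Ioi_of_hasDerivAt_of_monotoneOn {f f' : ℝ → ℝ} {a b : ℝ} (hab : a < b)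
    (hf : ∀ x ∈ Ioi a, HasDerivAt f (f' x) x) (hf' : MonotoneOn f' (Ioi a)) (hb : f' b = 0) :
    IsMinOn f (Ioi a) b := by
  have hderiv {x : ℝ} (hx : a < x) : deriv f x = f' x := (hf x hx).deriv
  have hdiff : DifferentiableOn ℝ f (Ioi a) :=
    fun x hx ↦ (hf x hx).differentiableAt.differentiableWithinAt
  refine isMinOn_Ioi_of_deriv (hf b hab).continuousAt
    (hdiff.mono Ioo_subset_Ioi_self) (hdiff.mono (Ioi_subset_Ioi hab.le)) ?_ ?_
  · intro x hx
    rw [hderiv hx.1, ← hb]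
    exact hf' hx.1 hab hx.2.le
  · intro x hx
    rw [hderiv (hab.trans hx), ← hb]
    exact hf' hab (hab.trans hx) hx.le

namespace CubicMajorant

noncomputable def gap (t : ℝ) : ℝ :=
  2 * (t - 1) + 3 * (t - 1) ^ 2 + 2 / 3 * (t - 1) ^ 3 - 2 * t ^ 2 * log t

noncomputable def gapDeriv (t : ℝ) : ℝ :=
  4 * (t - 1) + 2 * (t - 1) ^ 2 - 4 * t * log t

lemma hasDerivAt_gap {x : ℝ} (hx : 0 < x) : HasDerivAt gap (gapDeriv x) x := by
  have hshift : HasDerivAt (fun t : ℝ ↦ t - 1) 1 x := (hasDerivAt_id' (x := x)).sub_const 1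
  refine ((((hshift.const_mul 2).add ((hshift.fun_pow 2).const_mul 3)).add
    ((hshift.fun_pow 3).const_mul (2 / 3))).sub
    (((hasDerivAt_pow 2 x).const_mul 2).mul (hasDerivAt_log hx.ne'))).congr_deriv ?_
  simp only [gapDeriv]
  field_simp
  ring

lemma hasDerivAt_gapDeriv {x : ℝ} (hx : 0 < x) :
    HasDerivAt gapDeriv (4 * (x - 1 - log x)) x := by
  have hshift : HasDerivAt (fun t : ℝ ↦ t - 1) 1 x := (hasDerivAt_id' (x := x)).sub_const 1
  refine (((hshift.const_mul 4).add ((hshift.fun_pow 2).const_mul 2)).sub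
    (((hasDerivAt_id' (x := x)).const_mul 4).mul (hasDerivAt_log hx.ne'))).congr_deriv ?_
  field_simp
  ring

lemma monotoneOn_gapDeriv : MonotoneOn gapDeriv (Ioi 0) := by
  refine monotoneOn_of_hasDerivWithinAt_nonneg (convex_Ioi 0)
    (fun x hx ↦ (hasDerivAt_gapDeriv hx).continuousAt.continuousWithinAt)
    (fun x hx ↦ (hasDerivAt_gapDeriv (interior_subset hx)).hasDerivWithinAt) ?_
  intro x hx
  have := log_le_sub_one_of_pos (interior_subset hx : 0 < x)
  linarith

lemma isMinOn_gap : IsMinOn gap (Ioi 0) 1 :=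
  isMinOn_Ioi_of_hasDerivAt_of_monotoneOn one_pos (fun _ hx ↦ hasDerivAt_gap hx)
    monotoneOn_gapDeriv (by simp [gapDeriv])

end CubicMajorant

/-- Cubic majorant lemma: for every real `t > 0`,
`2t² log t ≤ P₃(t) = 2(t-1) + 3(t-1)² + (2/3)(t-1)³`. -/
theorem cubic_majorant (t : ℝ) (ht : 0 < t) :
    2 * t ^ 2 * Real.log t ≤
      2 * (t - 1) + 3 * (t - 1) ^ 2 + 2 / 3 * (t - 1) ^ 3 := by
  have hmin : CubicMajorant.gap 1 ≤ CubicMajorant.gap t := CubicMajorant.isMinOn_gap ht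
  norm_num [CubicMajorant.gap] at hmin
  linarith
end

section
/- Let a, r, t ≥ 0 be real numbers with a² + r² + t² = 1. Then (3/√2)·r²t + 3√2·rt² ≤ (1 − a)²(1 + 2a) + 4t². -/
theorem poly_aux (a r t : ℝ) (ha : 0 ≤ a) (hr : 0 ≤ r) (ht : 0 ≤ t)
    (h : a ^ 2 + r ^ 2 + t ^ 2 = 1) :
    9/4 * r ^ 2 * t + 9/2 * r * t ^ 2 ≤ (1 - a) ^ 2 * (1 + 2 * a) + 4 * t ^ 2 := by
  have ht1 : t ≤ 1 := by nlinarith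
  have ha1 : a ≤ 1 := by nlinarith
  nlinarith [mul_nonneg ha (sq_nonneg (a + t - 1)), mul_nonneg ht (sq_nonneg (r - 2*t)),
    mul_nonneg ht (sq_nonneg (a + t - 1)),
    mul_nonneg (sub_nonneg.2 ha1) (sq_nonneg (a + 3*t - 1)),
    mul_nonneg (sub_nonneg.2 ht1) (sq_nonneg (a + t - 1)),
    mul_nonneg (sub_nonneg.2 ht1) (sq_nonneg (a + 2*t - 1)),
    mul_nonneg (sub_nonneg.2 ht1) (sq_nonneg (2*a + 3*t - 2))]

/-- Scalar inequality: if `a, r, t ≥ 0` and `a² + r² + t² = 1`, then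
`(3/√2) r² t + 3√2 r t² ≤ (1-a)²(1+2a) + 4t²`. -/
theorem scalar_inequality_one (a r t : ℝ) (ha : 0 ≤ a) (hr : 0 ≤ r) (ht : 0 ≤ t)
    (h : a ^ 2 + r ^ 2 + t ^ 2 = 1) :
    3 / Real.sqrt 2 * r ^ 2 * t + 3 * Real.sqrt 2 * r * t ^ 2 ≤
      (1 - a) ^ 2 * (1 + 2 * a) + 4 * t ^ 2 := by
  have hs0 : (0:ℝ) < Real.sqrt 2 := Real.sqrt_pos.mpr (by norm_num)
  have hs2 : Real.sqrt 2 ^ 2 = 2 := Real.sq_sqrt (by norm_num)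
  have hsle : Real.sqrt 2 ≤ 3/2 := by nlinarith
  have h1 : 3 / Real.sqrt 2 ≤ 9/4 := by
    rw [div_le_iff₀ hs0]; nlinarith
  have h2 : 3 * Real.sqrt 2 ≤ 9/2 := by linarith
  have hrt : 0 ≤ r ^ 2 * t := mul_nonneg (sq_nonneg r) ht
  have htr : 0 ≤ r * t ^ 2 := mul_nonneg hr (sq_nonneg t)
  calc 3 / Real.sqrt 2 * r ^ 2 * t + 3 * Real.sqrt 2 * r * t ^ 2
      ≤ 9/4 * (r ^ 2 * t) + 9/2 * (r * t ^ 2) := by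
        have := mul_le_mul_of_nonneg_right h1 hrt
        have := mul_le_mul_of_nonneg_right h2 htr
        nlinarith
    _ ≤ (1 - a) ^ 2 * (1 + 2 * a) + 4 * t ^ 2 := by
        have := poly_aux a r t ha hr ht h
        linarith
end

section
/- Let a, r, t ≥ 0 be real numbers with a² + r² + t² = 1. Then (3/√2)·(r²t + rt²) ≤ (1 − a)²(1 + 2a) + (5/2)t². -/
/-- Scalar inequality: if `a, r, t ≥ 0` and `a² + r² + t² = 1`, then
`(3/√2)(r² t + r t²) ≤ (1-a)²(1+2a) + (5/2)t²`. -/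
theorem scalar_inequality_two (a r t : ℝ) (ha : 0 ≤ a) (hr : 0 ≤ r) (ht : 0 ≤ t)
    (h : a ^ 2 + r ^ 2 + t ^ 2 = 1) :
    3 / Real.sqrt 2 * (r ^ 2 * t + r * t ^ 2) ≤
      (1 - a) ^ 2 * (1 + 2 * a) + 5 / 2 * t ^ 2 := by
  have hs0 : (0:ℝ) < Real.sqrt 2 := by positivity
  set s := Real.sqrt 2 with hsdef
  have hs : s ^ 2 = 2 := Real.sq_sqrt (by norm_num)
  have ha1 : a ≤ 1 := by nlinarith [sq_nonneg r, sq_nonneg t]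
  have hsub : (0:ℝ) ≤ 1 - a := by linarith
  have hst : (s*t)^2 = 2*t^2 := by rw [mul_pow, hs]
  have hsr : (s*r)^2 = 2*r^2 := by rw [mul_pow, hs]
  have e1 : 2*s*(r^2*t) ≤ r^4 + 2*t^2 := by nlinarith [sq_nonneg (r^2 - s*t), hst]
  have e2 : 2*s*(r*t^2) ≤ 2*r^2*t^2 + t^2 := by
    nlinarith [mul_nonneg (sq_nonneg t) (sq_nonneg (s*r - 1)), hsr]
  have e3 : 3/2*r^4 + 3*r^2*t^2 ≤ 2*((1-a)^2*(1+2*a)) + 1/2*t^2 := by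
    nlinarith [mul_nonneg (mul_nonneg (mul_nonneg hsub hsub) hsub)
      (by linarith : (0:ℝ) ≤ 1 + 3*a), sq_nonneg (t^2), sq_nonneg t]
  have key : 3 * s * (r ^ 2 * t + r * t ^ 2) ≤
      2 * ((1 - a) ^ 2 * (1 + 2 * a) + 5 / 2 * t ^ 2) := by nlinarith [e1, e2, e3]
  have h3 : 3 / s * (r ^ 2 * t + r * t ^ 2) = 3 * s * (r ^ 2 * t + r * t ^ 2) / 2 := by
    rw [div_mul_eq_mul_div, eq_div_iff (by norm_num : (2:ℝ) ≠ 0)]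
    field_simp
    nlinarith [hs, hs0]
  rw [h3]
  linarith
end

section
/- High-frequency ℓ∞ estimate: let n ≥ 4 and let z: C_n → ℝ satisfy ∑_{j∈C_n} z_j = 0, ∑_{j∈C_n} z_j cos(2πj/n) = 0 and ∑_{j∈C_n} z_j sin(2πj/n) = 0 (i.e. z is orthogonal to constants and to V₁). Then Q(z) ≥ σ_n^{−1} ‖z‖_∞², where σ_n := 3/4 − (1/4)tan²(π/n) and ‖z‖_∞ := max_{i∈C_n} |z_i|. -/
/-!
Expand `z` in the discrete Fourier basis. By Parseval, `n² Q(z) = ∑ₖ c(k) |ẑ(k)|²` for the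
symbol `c(k) = (2 - 2 cos (2πk/n)) / λ_n - 2`, which is positive on the frequencies
`2 ≤ k ≤ n - 2`, and the orthogonality hypotheses say exactly that `ẑ` vanishes at the
remaining frequencies `0, ±1`. Fourier inversion gives `n |z i| ≤ ∑ₖ |ẑ(k)|`, and Cauchy–Schwarz
with weights `c(k)` bounds the square of this sum by `(∑ₖ c(k)⁻¹) · n² Q(z)`. Finally `c(k)⁻¹` is
a constant multiple of `cot ((k - 1)π/n) - cot ((k + 1)π/n)`, so `∑ₖ c(k)⁻¹` telescopes to `σ_n`.
-/

open Finset
open scoped ComplexConjugate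

namespace Real

lemma cot_pi_sub (x : ℝ) : cot (π - x) = -cot x := by
  rw [cot_eq_cos_div_sin, cot_eq_cos_div_sin, cos_pi_sub, sin_pi_sub, neg_div]

lemma sin_mul_pi_div_pos {n : ℕ} {t : ℝ} (ht0 : 0 < t) (htn : t < n) :
    0 < sin (t * (π / n)) := by
  have hn : (0 : ℝ) < n := ht0.trans htn
  apply sin_pos_of_pos_of_lt_pi (by positivity)
  calc t * (π / n) < n * (π / n) := by gcongr
    _ = π := by field_simp

end Real

namespace ZMod

variable {N : ℕ} [NeZero N]

section Module

variable {E : Type*} [AddCommGroup E] [Module ℂ E]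

lemma dft_comp_add_right (Φ : ZMod N → E) (a k : ZMod N) :
    𝓕 (fun j ↦ Φ (j + a)) k = stdAddChar (a * k) • 𝓕 Φ k := by
  simp only [dft_apply, smul_sum, smul_smul, ← AddChar.map_add_eq_mul]
  exact Fintype.sum_equiv (Equiv.addRight a) _ _ fun j ↦ by
    rw [Equiv.coe_addRight]; congr 2; ring

lemma dft_sub_comp_add_one (Φ : ZMod N → E) (k : ZMod N) :
    𝓕 (fun j ↦ Φ j - Φ (j + 1)) k = (1 - stdAddChar k) • 𝓕 Φ k := by
  change 𝓕 (Φ - fun j ↦ Φ (j + 1)) k = _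
  rw [map_sub, Pi.sub_apply, dft_comp_add_right, one_mul, sub_smul, one_smul]

lemma sum_stdAddChar_smul_dft (Φ : ZMod N → E) (j : ZMod N) :
    ∑ k, stdAddChar (k * j) • 𝓕 Φ k = (N : ℂ) • Φ j := by
  have h := invDFT_apply (𝓕 Φ) j
  rw [LinearEquiv.symm_apply_apply] at h
  rw [h, smul_smul, mul_inv_cancel₀ (Nat.cast_ne_zero.2 (NeZero.ne N)), one_smul]

end Module

lemma natCast_mul_norm_le_sum_norm_dft {E : Type*} [NormedAddCommGroup E] [NormedSpace ℂ E]
    (Φ : ZMod N → E) (j : ZMod N) : N * ‖Φ j‖ ≤ ∑ k, ‖𝓕 Φ k‖ :=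
  calc N * ‖Φ j‖ = ‖∑ k, stdAddChar (k * j) • 𝓕 Φ k‖ := by
        rw [sum_stdAddChar_smul_dft, norm_smul, Complex.norm_natCast]
    _ ≤ ∑ k, ‖stdAddChar (k * j) • 𝓕 Φ k‖ := norm_sum_le _ _
    _ = ∑ k, ‖𝓕 Φ k‖ := by simp only [norm_smul, AddChar.norm_apply, one_mul]

lemma sq_natCast_mul_norm_le_of_dft_eq_zero {E : Type*} [NormedAddCommGroup E]
    [NormedSpace ℂ E] (Φ : ZMod N → E) {S : Finset (ZMod N)} {c : ZMod N → ℝ}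
    (hc : ∀ k ∈ S, 0 < c k) (hΦ : ∀ k ∉ S, 𝓕 Φ k = 0) (j : ZMod N) :
    (N * ‖Φ j‖) ^ 2 ≤ (∑ k ∈ S, (c k)⁻¹) * ∑ k ∈ S, c k * ‖𝓕 Φ k‖ ^ 2 := by
  have hsupp : ∑ k, ‖𝓕 Φ k‖ = ∑ k ∈ S, ‖𝓕 Φ k‖ :=
    (sum_subset (subset_univ S) fun k _ hk ↦ by rw [hΦ k hk, norm_zero]).symm
  calc (N * ‖Φ j‖) ^ 2 ≤ (∑ k ∈ S, ‖𝓕 Φ k‖) ^ 2 := by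
        rw [← hsupp]; gcongr; exact natCast_mul_norm_le_sum_norm_dft Φ j
    _ ≤ _ := sum_sq_le_sum_mul_sum_of_sq_le_mul S (fun k hk ↦ (inv_pos.2 (hc k hk)).le)
        (fun k hk ↦ by have := hc k hk; positivity)
        fun k hk ↦ by rw [inv_mul_cancel_left₀ (hc k hk).ne']

lemma sum_norm_dft_sq (Φ : ZMod N → ℂ) : ∑ k, ‖𝓕 Φ k‖ ^ 2 = N * ∑ j, ‖Φ j‖ ^ 2 := by
  have hconj (x : ZMod N) : conj (stdAddChar (-x)) = stdAddChar x := by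
    rw [AddChar.map_neg_eq_conj, Complex.conj_conj]
  have hdft (k : ZMod N) : conj (𝓕 Φ k) = ∑ j, stdAddChar (j * k) * conj (Φ j) := by
    simp only [dft_apply, smul_eq_mul, map_sum, map_mul, hconj]
  have key : ∑ k, 𝓕 Φ k * conj (𝓕 Φ k) = N * ∑ j, Φ j * conj (Φ j) :=
    calc ∑ k, 𝓕 Φ k * conj (𝓕 Φ k)
        = ∑ j, conj (Φ j) * ∑ k, stdAddChar (k * j) * 𝓕 Φ k := by
          simp only [hdft, mul_sum]
          rw [sum_comm]
          refine sum_congr rfl fun j _ ↦ sum_congr rfl fun k _ ↦ ?_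
          rw [mul_comm k j]; ring
      _ = N * ∑ j, Φ j * conj (Φ j) := by
          simp only [← smul_eq_mul (a := stdAddChar _), sum_stdAddChar_smul_dft, mul_sum]
          refine sum_congr rfl fun j _ ↦ ?_
          rw [smul_eq_mul]; ring
  simp only [Complex.mul_conj'] at key
  exact_mod_cast key

lemma norm_one_sub_stdAddChar_sq (k : ZMod N) :
    ‖1 - stdAddChar k‖ ^ 2 = 2 - 2 * Real.cos (2 * Real.pi * k.val / N) := by
  have harg : 2 * Real.pi * Complex.I * k.val / N = Complex.I * ↑(2 * Real.pi * k.val / N) := by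
    push_cast; ring
  rw [stdAddChar_apply, toCircle_apply, harg, norm_sub_rev, Complex.norm_exp_I_mul_ofReal_sub_one,
    Real.norm_eq_abs, sq_abs, mul_pow, Real.sin_sq_eq_half_sub]
  ring_nf

lemma dft_ofReal_neg (x : ZMod N → ℝ) (k : ZMod N) :
    𝓕 (fun j ↦ (x j : ℂ)) (-k) = conj (𝓕 (fun j ↦ (x j : ℂ)) k) := by
  simp only [dft_apply, smul_eq_mul, map_sum, map_mul, Complex.conj_ofReal,
    ← AddChar.map_neg_eq_conj, mul_neg]

lemma dft_ofReal_neg_one (x : ZMod N → ℝ) :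
    𝓕 (fun j ↦ (x j : ℂ)) (-1) =
      ↑(∑ j, x j * Real.cos (2 * Real.pi * j.val / N)) +
        ↑(∑ j, x j * Real.sin (2 * Real.pi * j.val / N)) * Complex.I := by
  simp only [dft_apply, mul_neg, mul_one, neg_neg, stdAddChar_apply, toCircle_apply, smul_eq_mul]
  push_cast
  rw [sum_mul, ← sum_add_distrib]
  refine sum_congr rfl fun j _ ↦ ?_
  have harg : 2 * Real.pi * Complex.I * j.val / N = ↑(2 * Real.pi * j.val / N) * Complex.I := by
    push_cast; ring
  rw [harg, Complex.exp_mul_I, ← Complex.ofReal_cos, ← Complex.ofReal_sin]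
  push_cast; ring

lemma eq_zero_or_eq_one_or_eq_neg_one_of_val_notMem {k : ZMod N}
    (hk : k.val ∉ Icc 2 (N - 2)) : k = 0 ∨ k = 1 ∨ k = -1 := by
  have hlt := k.val_lt
  rw [mem_Icc] at hk
  rw [← natCast_zmod_val k]
  obtain h | h | h : k.val = 0 ∨ k.val = 1 ∨ k.val = N - 1 := by omega
  · simp [h]
  · simp [h]
  · right; right
    rw [h, Nat.cast_sub (by omega), natCast_self, Nat.cast_one, zero_sub]

lemma sum_filter_val_mem {M : Type*} [AddCommMonoid M] (f : ℕ → M) {t : Finset ℕ}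
    (ht : ∀ m ∈ t, m < N) :
    ∑ k ∈ univ.filter (fun k : ZMod N ↦ k.val ∈ t), f k.val = ∑ m ∈ t, f m :=
  sum_nbij' val Nat.cast (fun _ hk ↦ (mem_filter.1 hk).2)
    (fun m hm ↦ mem_filter.2 ⟨mem_univ _, (val_cast_of_lt (ht m hm)).symm ▸ hm⟩)
    (fun k _ ↦ natCast_zmod_val k) (fun m hm ↦ val_cast_of_lt (ht m hm)) fun _ _ ↦ rfl

end ZMod

namespace DiscreteCircle

open Real ZMod

variable {n : ℕ}

noncomputable def Q (n : ℕ) [NeZero n] (x : ZMod n → ℝ) : ℝ :=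
  1 / (1 - cos (2 * π / n)) * ((∑ j, (x j - x (j + 1)) ^ 2) / n) - 2 * ((∑ j, x j ^ 2) / n)

noncomputable def qSymbol (n : ℕ) (t : ℝ) : ℝ :=
  (2 - 2 * cos (2 * π * t / n)) / (1 - cos (2 * π / n)) - 2

def highFreq (n : ℕ) [NeZero n] : Finset (ZMod n) :=
  univ.filter fun k ↦ k.val ∈ Icc 2 (n - 2)

lemma sum_qSymbol_mul_norm_dft_sq [NeZero n] (x : ZMod n → ℝ) :
    ∑ k, qSymbol n k.val * ‖𝓕 (fun j ↦ (x j : ℂ)) k‖ ^ 2 = n ^ 2 * Q n x := by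
  have hD := sum_norm_dft_sq fun j ↦ (x j : ℂ) - x (j + 1)
  have hx := sum_norm_dft_sq fun j ↦ (x j : ℂ)
  simp only [dft_sub_comp_add_one, smul_eq_mul, norm_mul, mul_pow,
    norm_one_sub_stdAddChar_sq] at hD
  simp only [← Complex.ofReal_sub, Complex.norm_real, norm_eq_abs, sq_abs] at hD hx
  have hsplit (t b : ℝ) : qSymbol n t * b =
      1 / (1 - cos (2 * π / n)) * ((2 - 2 * cos (2 * π * t / n)) * b) - 2 * b := by
    unfold qSymbol; ring
  have hn : (n : ℝ) ≠ 0 := Nat.cast_ne_zero.2 (NeZero.ne n)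
  simp only [hsplit]
  rw [sum_sub_distrib, ← mul_sum, ← mul_sum, hD, hx, Q]
  field_simp

lemma dft_eq_zero_of_notMem_highFreq [NeZero n] {x : ZMod n → ℝ} (h0 : ∑ j, x j = 0)
    (hcos : ∑ j, x j * cos (2 * π * j.val / n) = 0)
    (hsin : ∑ j, x j * sin (2 * π * j.val / n) = 0) {k : ZMod n} (hk : k ∉ highFreq n) :
    𝓕 (fun j ↦ (x j : ℂ)) k = 0 := by
  have hneg_one : 𝓕 (fun j ↦ (x j : ℂ)) (-1) = 0 := by
    rw [dft_ofReal_neg_one, hcos, hsin]; simp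
  simp only [highFreq, mem_filter, mem_univ, true_and] at hk
  obtain rfl | rfl | rfl := eq_zero_or_eq_one_or_eq_neg_one_of_val_notMem hk
  · rw [dft_apply_zero]; exact_mod_cast h0
  · rw [← neg_neg (1 : ZMod n), dft_ofReal_neg, hneg_one, map_zero]
  · exact hneg_one

lemma qSymbol_eq (hn : 1 < n) (t : ℝ) :
    qSymbol n t = 2 * sin ((t + 1) * (π / n)) * sin ((t - 1) * (π / n)) / sin (π / n) ^ 2 := by
  have hs : 0 < sin (π / n) := by
    simpa using sin_mul_pi_div_pos (n := n) one_pos (by exact_mod_cast hn)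
  have hlam : 1 - cos (2 * π / n) = 2 * sin (π / n) ^ 2 := by
    rw [mul_div_assoc, cos_two_mul, cos_sq']; ring
  have hcos : cos (2 * π / n) - cos (2 * π * t / n) =
      2 * sin ((t + 1) * (π / n)) * sin ((t - 1) * (π / n)) := by
    rw [cos_sub_cos, show (2 * π / n - 2 * π * t / n) / 2 = -((t - 1) * (π / n)) by ring,
      show (2 * π / n + 2 * π * t / n) / 2 = (t + 1) * (π / n) by ring, sin_neg]
    ring
  have hq : qSymbol n t = 2 * (cos (2 * π / n) - cos (2 * π * t / n)) / (1 - cos (2 * π / n)) := by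
    have hne : 1 - cos (2 * π / n) ≠ 0 := by rw [hlam]; positivity
    rw [qSymbol]; field_simp; ring
  rw [hq, hcos, hlam]
  field_simp

lemma qSymbol_pos {m : ℕ} (hm : m ∈ Icc 2 (n - 2)) : 0 < qSymbol n m := by
  obtain ⟨hm2, hmn⟩ := mem_Icc.1 hm
  have hm' : (2 : ℝ) ≤ m := by exact_mod_cast hm2
  have hmn' : (m : ℝ) + 2 ≤ n := by exact_mod_cast (show m + 2 ≤ n by omega)
  rw [qSymbol_eq (by omega)]
  have hsp := sin_mul_pi_div_pos (n := n) (t := m + 1) (by linarith) (by linarith)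
  have hsm := sin_mul_pi_div_pos (n := n) (t := m - 1) (by linarith) (by linarith)
  have hs : sin (π / n) ≠ 0 := by
    simpa using (sin_mul_pi_div_pos (n := n) one_pos (by linarith)).ne'
  positivity

lemma inv_qSymbol_eq {t : ℝ} (ht : 1 < t) (htn : t + 1 < n) :
    (qSymbol n t)⁻¹ = sin (π / n) ^ 2 / (2 * sin (2 * (π / n))) *
      (cot ((t - 1) * (π / n)) - cot ((t + 1) * (π / n))) := by
  have hn : 1 < n := by exact_mod_cast (show (1 : ℝ) < n by linarith)
  have hs : 0 < sin (π / n) := by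
    simpa using sin_mul_pi_div_pos (n := n) one_pos (by exact_mod_cast hn)
  have hs2 := sin_mul_pi_div_pos (n := n) (t := 2) two_pos (by linarith)
  have hsm := sin_mul_pi_div_pos (n := n) (t := t - 1) (by linarith) (by linarith)
  have hsp := sin_mul_pi_div_pos (n := n) (t := t + 1) (by linarith) (by linarith)
  have hsub : sin (2 * (π / n)) =
      cos ((t - 1) * (π / n)) * sin ((t + 1) * (π / n)) -
        sin ((t - 1) * (π / n)) * cos ((t + 1) * (π / n)) := by
    rw [show 2 * (π / n) = (t + 1) * (π / n) - (t - 1) * (π / n) by ring, sin_sub]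
    ring
  rw [qSymbol_eq hn, cot_eq_cos_div_sin, cot_eq_cos_div_sin, div_sub_div _ _ hsm.ne' hsp.ne',
    ← hsub]
  generalize sin (2 * (π / n)) = a at hs2 ⊢
  field_simp

lemma sum_inv_qSymbol (hn : 4 ≤ n) :
    ∑ m ∈ Icc 2 (n - 2), (qSymbol n m)⁻¹ = 3 / 4 - 1 / 4 * tan (π / n) ^ 2 := by
  set α := π / n with hα
  set f : ℕ → ℝ := fun i ↦ -(cot ((i - 1) * α) + cot (i * α)) with hf
  have hterm (m : ℕ) (hm : m ∈ Icc 2 (n - 2)) :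
      (qSymbol n m)⁻¹ = sin α ^ 2 / (2 * sin (2 * α)) * (f (m + 1) - f m) := by
    have hm := mem_Icc.1 hm
    have h1 : (1 : ℝ) < m := by exact_mod_cast (show 1 < m by omega)
    have h2 : (m : ℝ) + 1 < n := by exact_mod_cast (show m + 1 < n by omega)
    rw [inv_qSymbol_eq h1 h2, ← hα, hf]
    push_cast
    ring_nf
  have hn' : (4 : ℝ) ≤ n := by exact_mod_cast hn
  have hcast : ((n - 2 + 1 : ℕ) : ℝ) = n - 1 := by
    rw [Nat.cast_add, Nat.cast_sub (by omega)]; ring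
  have hend : f (n - 2 + 1) - f 2 = 2 * (cot α + cot (2 * α)) := by
    simp only [hf]
    rw [hcast, show ((n : ℝ) - 1 - 1) * α = π - 2 * α by rw [hα]; field_simp; ring,
      show ((n : ℝ) - 1) * α = π - α by rw [hα]; field_simp, cot_pi_sub, cot_pi_sub]
    push_cast
    ring_nf
  rw [sum_congr rfl hterm, ← mul_sum, sum_Icc_sub (by omega), hend]
  have hs : 0 < sin α := by simpa using sin_mul_pi_div_pos (n := n) one_pos (by linarith)
  have hc : 0 < cos α := by
    have hα0 : 0 < α := by rw [hα]; positivity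
    refine cos_pos_of_mem_Ioo ⟨by linarith [pi_pos], ?_⟩
    rw [hα, div_lt_div_iff₀ (by linarith) two_pos]
    nlinarith [pi_pos]
  rw [cot_eq_cos_div_sin, cot_eq_cos_div_sin, tan_eq_sin_div_cos, sin_two_mul, cos_two_mul]
  field_simp
  linear_combination 4 * sin_sq_add_cos_sq α

lemma sum_highFreq_inv_qSymbol [NeZero n] (hn : 4 ≤ n) :
    ∑ k ∈ highFreq n, (qSymbol n k.val)⁻¹ = 3 / 4 - 1 / 4 * tan (π / n) ^ 2 :=
  (sum_filter_val_mem (fun m ↦ (qSymbol n m)⁻¹) fun m hm ↦ by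
    have := (mem_Icc.1 hm).2; omega).trans (sum_inv_qSymbol hn)

end DiscreteCircle

open DiscreteCircle ZMod in
/-- High-frequency ℓ∞ estimate: let `n ≥ 4` and let `z : C_n → ℝ` be orthogonal to the
constants and to the first eigenspace `V₁` (spanned by `j ↦ cos(2πj/n)` and
`j ↦ sin(2πj/n)`). Then `Q(z) := (1/λ_n) D(z) - 2‖z‖₂² ≥ σ_n⁻¹ ‖z‖_∞²`, where
`λ_n = 1 - cos(2π/n)`, `D(z) = (1/n)∑_j (z_j - z_{j+1})²`, `‖z‖₂² = (1/n)∑_j z_j²`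
and `σ_n = 3/4 - (1/4)tan²(π/n)`. -/
theorem high_frequency_linfty_estimate (n : ℕ) [NeZero n] (hn : 4 ≤ n) (z : ZMod n → ℝ)
    (h0 : ∑ j, z j = 0)
    (hcos : ∑ j, z j * Real.cos (2 * Real.pi * (j.val : ℝ) / n) = 0)
    (hsin : ∑ j, z j * Real.sin (2 * Real.pi * (j.val : ℝ) / n) = 0) :
    1 / (1 - Real.cos (2 * Real.pi / n)) * ((∑ j, (z j - z (j + 1)) ^ 2) / n) -
        2 * ((∑ j, (z j) ^ 2) / n) ≥
      (3 / 4 - 1 / 4 * Real.tan (Real.pi / n) ^ 2)⁻¹ *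
        (Finset.univ.sup' Finset.univ_nonempty fun i => |z i|) ^ 2 := by
  change Q n z ≥ _
  have hvanish (k : ZMod n) (hk : k ∉ highFreq n) : 𝓕 (fun j ↦ (z j : ℂ)) k = 0 :=
    dft_eq_zero_of_notMem_highFreq h0 hcos hsin hk
  have hpos (k : ZMod n) (hk : k ∈ highFreq n) : 0 < qSymbol n k.val :=
    qSymbol_pos (mem_filter.1 hk).2
  have hσpos : 0 < 3 / 4 - 1 / 4 * Real.tan (Real.pi / n) ^ 2 := by
    rw [← sum_inv_qSymbol hn]
    exact sum_pos (fun m hm ↦ inv_pos.2 (qSymbol_pos hm)) (nonempty_Icc.2 (by omega))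
  have henergy : ∑ k ∈ highFreq n, qSymbol n k.val * ‖𝓕 (fun j ↦ (z j : ℂ)) k‖ ^ 2 =
      n ^ 2 * Q n z := by
    rw [← sum_qSymbol_mul_norm_dft_sq]
    exact sum_subset (subset_univ _) fun k _ hk ↦ by rw [hvanish k hk, norm_zero]; ring
  obtain ⟨i, -, hi⟩ := exists_mem_eq_sup' univ_nonempty fun i ↦ |z i|
  have hbound := sq_natCast_mul_norm_le_of_dft_eq_zero _ hpos hvanish i
  rw [sum_highFreq_inv_qSymbol hn, henergy, Complex.norm_real, Real.norm_eq_abs, mul_pow,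
    mul_left_comm] at hbound
  rw [hi, ge_iff_le, inv_mul_le_iff₀ hσpos]
  exact le_of_mul_le_mul_left hbound (by positivity)
end
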